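/- arXiv:1410.3923 — 5 statements merged into one kernel-verified Lean document; each statement's English description precedes it below -/
import Mathlib

section
/- For every real N > 0 and every real c with log N ≠ c, one has (N·e^{-c/2} − e^{c/2})/(log N − c) ≤ e^{|c|/2}·(1 + N)/2. -/
/-!
Put `u = log N - c`. Then `N e^{-c/2} = e^{c/2} e^u`, so the left-hand side is
`e^{c/2} (e^u - 1)/u = e^{c/2} e^{u/2} sinh(u/2)/(u/2)`. Since `t cosh t - sinh t` has derivative
`t sinh t ≥ 0`, it has the sign of `t`, i.e. `sinh t / t ≤ cosh t`; this bounds the left-hand side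
by `e^{c/2} (e^u + 1)/2 = (N e^{-c/2} + e^{c/2})/2`, and `e^{±c/2} ≤ e^{|c|/2}` finishes.
-/

open Real

lemma hasDerivAt_mul_cosh_sub_sinh (t : ℝ) :
    HasDerivAt (fun t => t * cosh t - sinh t) (t * sinh t) t :=
  (((hasDerivAt_id' t).mul (hasDerivAt_cosh t)).sub (hasDerivAt_sinh t)).congr_deriv (by ring)

lemma mul_sinh_nonneg (t : ℝ) : 0 ≤ t * sinh t := by
  rcases le_total 0 t with ht | ht
  · exact mul_nonneg ht (sinh_nonneg_iff.2 ht)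
  · exact mul_nonneg_of_nonpos_of_nonpos ht (sinh_nonpos_iff.2 ht)

lemma monotone_mul_cosh_sub_sinh : Monotone fun t : ℝ => t * cosh t - sinh t :=
  monotone_of_deriv_nonneg (fun t => (hasDerivAt_mul_cosh_sub_sinh t).differentiableAt)
    fun t => (hasDerivAt_mul_cosh_sub_sinh t).deriv ▸ mul_sinh_nonneg t

-- Junk value at `t = 0`: there `sinh 0 / 0 = 0 ≤ 1`.
lemma sinh_div_self_le_cosh (t : ℝ) : sinh t / t ≤ cosh t := by
  rcases lt_trichotomy t 0 with ht | rfl | ht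
  · rw [div_le_iff_of_neg ht, mul_comm]
    simpa using monotone_mul_cosh_sub_sinh ht.le
  · simp
  · rw [div_le_iff₀ ht, mul_comm]
    simpa using monotone_mul_cosh_sub_sinh ht.le

lemma exp_sub_one_div_le (u : ℝ) : (exp u - 1) / u ≤ (exp u + 1) / 2 := by
  have hu : exp u = exp (u / 2) * exp (u / 2) := by rw [← exp_add, add_halves]
  have hinv : exp (u / 2) * exp (-(u / 2)) = 1 := by rw [← exp_add, add_neg_cancel, exp_zero]
  have hsinh : (exp u - 1) / u = exp (u / 2) * (sinh (u / 2) / (u / 2)) := by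
    rw [sinh_eq, hu]
    linear_combination (1 / u) * hinv
  have hcosh : (exp u + 1) / 2 = exp (u / 2) * cosh (u / 2) := by
    rw [cosh_eq, hu]
    linear_combination (-1 / 2) * hinv
  rw [hsinh, hcosh]
  exact mul_le_mul_of_nonneg_left (sinh_div_self_le_cosh _) (exp_pos _).le

theorem omega_upper_bound_general (N c : ℝ) (hN : 0 < N) :
    (N * Real.exp (-c / 2) - Real.exp (c / 2)) / (Real.log N - c) ≤
      Real.exp (|c| / 2) * (1 + N) / 2 := by
  set u := log N - c
  have hN_exp : N * exp (-c / 2) = exp (c / 2) * exp u := by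
    rw [← exp_add, show c / 2 + u = log N + -c / 2 by ring, exp_add, exp_log hN]
  have hneg : exp (-c / 2) ≤ exp (|c| / 2) := exp_le_exp.2 (by linarith [neg_abs_le c])
  have hpos : exp (c / 2) ≤ exp (|c| / 2) := exp_le_exp.2 (by linarith [le_abs_self c])
  calc (N * exp (-c / 2) - exp (c / 2)) / u
      = exp (c / 2) * ((exp u - 1) / u) := by rw [hN_exp]; ring
    _ ≤ exp (c / 2) * ((exp u + 1) / 2) :=
        mul_le_mul_of_nonneg_left (exp_sub_one_div_le u) (exp_pos _).le
    _ = (N * exp (-c / 2) + exp (c / 2)) / 2 := by rw [hN_exp]; ring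
    _ ≤ exp (|c| / 2) * (1 + N) / 2 := by nlinarith [mul_le_mul_of_nonneg_left hneg hN.le]

/-- Pointwise upper bound Ω_N ≤ e^{|c|/2}·(1+N)/2 (Appendix B of the paper):
for every N > 0 and every real c with log N ≠ c,
(N·e^{-c/2} − e^{c/2})/(log N − c) ≤ e^{|c|/2}·(1 + N)/2. -/
theorem omega_upper_bound (N c : ℝ) (hN : 0 < N) (hc : Real.log N ≠ c) :
    (N * Real.exp (-c / 2) - Real.exp (c / 2)) / (Real.log N - c) ≤
      Real.exp (|c| / 2) * (1 + N) / 2 :=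
  omega_upper_bound_general N c hN
end

section
/- Let 𝕋 = (ℝ/Lℤ)^d be the d-dimensional torus of side length L > 0 with its Haar measure, let W : 𝕋 → ℝ be bounded and measurable, let μ ∈ ℝ, m₀ > 0, κ ∈ (0, 1/2) and θ♯ > 0 with m₀/κ ≤ θ♯. Assume that for every R ∈ L²(𝕋), ∫_{𝕋×𝕋} W(x−y) R(x) R(y) dx dy ≥ −(1/θ♯)·∫_𝕋 R² dx. Then for all measurable N_A, N_B : 𝕋 → ℝ with κ·m₀ ≤ N_A(x) ≤ m₀/κ and κ·m₀ ≤ N_B(x) ≤ m₀/κ for all x, and for every s ∈ [0, 1], one has G_μ((1−s)·N_A + s·N_B) ≤ (1−s)·G_μ(N_A) + s·G_μ(N_B). -/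
/-!
Write `E` for the entropy part and `Q` for the interaction form of `G_μ`, and set
`N_s = (1 - s) N_A + s N_B`, `D = N_B - N_A`. Densities of `B_κ` take values in `[0, θ]`, where
`t ↦ t log t - t² / (2θ)` is convex; hence
`E(N_s) ≤ (1 - s) E(N_A) + s E(N_B) - s (1 - s) / (2θ) ∫ D²`. Since `Q` is quadratic,
`Q(N_s) = (1 - s) Q(N_A) + s Q(N_B) - s (1 - s) Q(D)`, and `Q(D) ≥ -(1/θ) ∫ D²`: the concavity of
the interaction is absorbed by the strong convexity of the entropy.
-/

open MeasureTheory

/-- The grand canonical free energy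
G_μ(N) = ∫ (N log N − (1+μ) N) dx + (1/2) ∫∫ W(x−y) N(x) N(y) dx dy
on the d-dimensional torus of side length L. -/
noncomputable def Gmu {d : ℕ} {L : ℝ} [Fact (0 < L)]
    (W : (Fin d → AddCircle L) → ℝ) (μ : ℝ) (N : (Fin d → AddCircle L) → ℝ) : ℝ :=
  (∫ x, (N x * Real.log (N x) - (1 + μ) * N x)) +
    (1 / 2) * ∫ x, ∫ y, W (x - y) * N x * N y

open Set Real Function

theorem convexOn_mul_log_sub_sq_div (θ : ℝ) :
    ConvexOn ℝ (Icc 0 θ) (fun t => t * log t - t ^ 2 / (2 * θ)) := by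
  refine convexOn_of_hasDerivWithinAt2_nonneg (convex_Icc 0 θ)
    (f' := fun t => log t + 1 - t / θ) (f'' := fun t => t⁻¹ - 1 / θ)
    ((continuous_mul_log.sub ((continuous_pow 2).div_const _)).continuousOn) ?_ ?_ ?_
  all_goals
    rw [interior_Icc]
    rintro t ⟨ht0, htθ⟩
  · have hsq : HasDerivAt (fun t : ℝ => t ^ 2 / (2 * θ)) (t / θ) t :=
      ((hasDerivAt_pow 2 t).div_const (2 * θ)).congr_deriv (by push_cast; ring)
    exact ((hasDerivAt_mul_log ht0.ne').sub hsq).hasDerivWithinAt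
  · have hlin : HasDerivAt (fun t : ℝ => t / θ) (1 / θ) t := (hasDerivAt_id t).div_const θ
    exact (((hasDerivAt_log ht0.ne').add_const 1).sub hlin).hasDerivWithinAt
  · rw [sub_nonneg, one_div]
    exact inv_anti₀ ht0 (by linarith)

theorem mul_log_convex_combination_le {θ a b s : ℝ} (ha : a ∈ Icc 0 θ) (hb : b ∈ Icc 0 θ)
    (hs : s ∈ Icc (0 : ℝ) 1) :
    ((1 - s) * a + s * b) * log ((1 - s) * a + s * b) ≤
      (1 - s) * (a * log a) + s * (b * log b) - s * (1 - s) / (2 * θ) * (b - a) ^ 2 := by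
  have h := (convexOn_mul_log_sub_sq_div θ).2 ha hb (sub_nonneg.2 hs.2) hs.1 (by ring)
  simp only [smul_eq_mul] at h
  linear_combination h

section FiniteMeasure

variable {X : Type*} [MeasurableSpace X] {ν : Measure X} [IsFiniteMeasure ν]

theorem Continuous.integrable_comp_of_mem_Icc {g : ℝ → ℝ} (hg : Continuous g) {N : X → ℝ}
    (hN : Measurable N) {a b : ℝ} (hNab : ∀ x, N x ∈ Icc a b) :
    Integrable (fun x => g (N x)) ν := by
  obtain ⟨C, hC⟩ := isCompact_Icc.exists_bound_of_continuousOn hg.continuousOn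
  exact .of_bound (hg.measurable.comp hN).aestronglyMeasurable C
    (.of_forall fun x => hC _ (hNab x))

theorem integral_mul_log_sub_convex_combination_le {A B : X → ℝ} {θ s : ℝ} (c : ℝ)
    (hA : Measurable A) (hB : Measurable B) (hAθ : ∀ x, A x ∈ Icc 0 θ)
    (hBθ : ∀ x, B x ∈ Icc 0 θ) (hs : s ∈ Icc (0 : ℝ) 1) :
    ∫ x, (((1 - s) * A x + s * B x) * log ((1 - s) * A x + s * B x)
        - c * ((1 - s) * A x + s * B x)) ∂ν ≤
      (1 - s) * ∫ x, (A x * log (A x) - c * A x) ∂ν + s * ∫ x, (B x * log (B x) - c * B x) ∂ν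
        - s * (1 - s) / (2 * θ) * ∫ x, (B x - A x) ^ 2 ∂ν := by
  have hent : Continuous fun t => t * log t - c * t :=
    continuous_mul_log.sub (continuous_const.mul continuous_id)
  have hcomb : ∀ x, (1 - s) * A x + s * B x ∈ Icc 0 θ := fun x => by
    simpa only [smul_eq_mul] using
      convex_Icc 0 θ (hAθ x) (hBθ x) (sub_nonneg.2 hs.2) hs.1 (by ring)
  have hdiff : ∀ x, B x - A x ∈ Icc (-θ) θ := fun x =>
    ⟨by linarith [(hAθ x).2, (hBθ x).1], by linarith [(hAθ x).1, (hBθ x).2]⟩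
  have hintA := hent.integrable_comp_of_mem_Icc (ν := ν) hA hAθ
  have hintB := hent.integrable_comp_of_mem_Icc (ν := ν) hB hBθ
  have hintD := (continuous_pow 2).integrable_comp_of_mem_Icc (ν := ν)
    (by fun_prop : Measurable fun x => B x - A x) hdiff
  have hintC := hent.integrable_comp_of_mem_Icc (ν := ν)
    (by fun_prop : Measurable fun x => (1 - s) * A x + s * B x) hcomb
  calc _ ≤ ∫ x, ((1 - s) * (A x * log (A x) - c * A x) + s * (B x * log (B x) - c * B x)
          - s * (1 - s) / (2 * θ) * (B x - A x) ^ 2) ∂ν := by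
        refine integral_mono hintC (((hintA.const_mul _).add (hintB.const_mul _)).sub
          (hintD.const_mul _)) fun x => ?_
        linear_combination mul_log_convex_combination_le (hAθ x) (hBθ x) hs
    _ = _ := by
        have hintAB : Integrable (fun x => (1 - s) * (A x * log (A x) - c * A x)
            + s * (B x * log (B x) - c * B x)) ν := (hintA.const_mul _).add (hintB.const_mul _)
        rw [integral_sub hintAB (hintD.const_mul _),
          integral_add (hintA.const_mul _) (hintB.const_mul _),
          integral_const_mul, integral_const_mul, integral_const_mul]

theorem integrable_kernel_mul_mul {K : X → X → ℝ} (hK : MemLp (uncurry K) ⊤ (ν.prod ν))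
    {N M : X → ℝ} (hN : MemLp N ⊤ ν) (hM : MemLp M ⊤ ν) :
    Integrable (fun p : X × X => K p.1 p.2 * N p.1 * M p.2) (ν.prod ν) :=
  have h : MemLp (fun p : X × X => K p.1 p.2 * N p.1 * M p.2) ⊤ (ν.prod ν) :=
    (hM.comp_snd ν).mul (r := ⊤) ((hN.comp_fst ν).mul (r := ⊤) hK)
  h.integrable le_top

theorem integral_integral_kernel_convex_combination {K : X → X → ℝ}
    (hK : MemLp (uncurry K) ⊤ (ν.prod ν)) {A B : X → ℝ} (hA : MemLp A ⊤ ν) (hB : MemLp B ⊤ ν)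
    (s : ℝ) :
    ∫ x, ∫ y, K x y * ((1 - s) * A x + s * B x) * ((1 - s) * A y + s * B y) ∂ν ∂ν =
      (1 - s) * ∫ x, ∫ y, K x y * A x * A y ∂ν ∂ν + s * ∫ x, ∫ y, K x y * B x * B y ∂ν ∂ν
        - s * (1 - s) * ∫ x, ∫ y, K x y * (B x - A x) * (B y - A y) ∂ν ∂ν := by
  have hC : MemLp (fun x => (1 - s) * A x + s * B x) ⊤ ν := (hA.const_mul _).add (hB.const_mul _)
  have hKA := integrable_kernel_mul_mul hK hA hA
  have hKB := integrable_kernel_mul_mul hK hB hB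
  have hD : MemLp (fun x => B x - A x) ⊤ ν := hB.sub hA
  have hKD := integrable_kernel_mul_mul hK hD hD
  have hKAB : Integrable (fun p : X × X => (1 - s) * (K p.1 p.2 * A p.1 * A p.2)
      + s * (K p.1 p.2 * B p.1 * B p.2)) (ν.prod ν) := (hKA.const_mul _).add (hKB.const_mul _)
  rw [integral_integral (integrable_kernel_mul_mul hK hC hC), integral_integral hKA,
    integral_integral hKB, integral_integral hKD, ← integral_const_mul, ← integral_const_mul,
    ← integral_const_mul, ← integral_add (hKA.const_mul _) (hKB.const_mul _),
    ← integral_sub hKAB (hKD.const_mul _)]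
  congr 1 with p
  ring

end FiniteMeasure

theorem Gmu_convex_on_Bkappa_general (d : ℕ) (L : ℝ) [Fact (0 < L)]
    (W : (Fin d → AddCircle L) → ℝ) (hWmeas : Measurable W)
    (hWbdd : ∃ C : ℝ, ∀ z, |W z| ≤ C)
    (μ m₀ κ θ : ℝ) (hm₀ : 0 < m₀) (hκ : κ ∈ Set.Ioo (0 : ℝ) (1 / 2))
    (hmκθ : m₀ / κ ≤ θ)
    (hW : ∀ R : (Fin d → AddCircle L) → ℝ, MemLp R 2 volume →
      (∫ x, ∫ y, W (x - y) * R x * R y) ≥ -(1 / θ) * ∫ x, (R x) ^ 2)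
    (N_A N_B : (Fin d → AddCircle L) → ℝ)
    (hAmeas : Measurable N_A) (hBmeas : Measurable N_B)
    (hAbd : ∀ x, κ * m₀ ≤ N_A x ∧ N_A x ≤ m₀ / κ)
    (hBbd : ∀ x, κ * m₀ ≤ N_B x ∧ N_B x ≤ m₀ / κ)
    (s : ℝ) (hs : s ∈ Set.Icc (0 : ℝ) 1) :
    Gmu W μ (fun x => (1 - s) * N_A x + s * N_B x) ≤
      (1 - s) * Gmu W μ N_A + s * Gmu W μ N_B := by
  obtain ⟨C, hC⟩ := hWbdd
  have mem_Icc : ∀ N : (Fin d → AddCircle L) → ℝ, (∀ x, κ * m₀ ≤ N x ∧ N x ≤ m₀ / κ) →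
      ∀ x, N x ∈ Icc 0 θ := fun N hN x =>
    ⟨(mul_pos hκ.1 hm₀).le.trans (hN x).1, (hN x).2.trans hmκθ⟩
  have memLp_top : ∀ N : (Fin d → AddCircle L) → ℝ, Measurable N → (∀ x, N x ∈ Icc 0 θ) →
      MemLp N ⊤ volume := fun N hN hNθ =>
    memLp_top_of_bound hN.aestronglyMeasurable θ
      (.of_forall fun x => abs_le.2 ⟨by linarith [(hNθ x).1, (hNθ x).2], (hNθ x).2⟩)
  have hA := mem_Icc N_A hAbd
  have hB := mem_Icc N_B hBbd
  have hAtop := memLp_top N_A hAmeas hA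
  have hBtop := memLp_top N_B hBmeas hB
  have hWtop : MemLp (uncurry fun x y => W (x - y)) ⊤ (volume.prod volume) :=
    memLp_top_of_bound (hWmeas.comp measurable_sub).aestronglyMeasurable C
      (.of_forall fun p => hC _)
  have hQD := hW (fun x => N_B x - N_A x) ((hBtop.sub hAtop).mono_exponent le_top)
  have hentropy := integral_mul_log_sub_convex_combination_le (ν := volume) (1 + μ)
    hAmeas hBmeas hA hB hs
  have hss : 0 ≤ s * (1 - s) / 2 :=
    div_nonneg (mul_nonneg hs.1 (sub_nonneg.2 hs.2)) zero_le_two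
  have hQDs := mul_le_mul_of_nonneg_left hQD hss
  unfold Gmu
  beta_reduce
  rw [integral_integral_kernel_convex_combination hWtop hAtop hBtop s]
  linear_combination hentropy + hQDs

/-- Proposition 4.2 of the paper (convexity part): if the quadratic form of W is
bounded below by −1/θ♯ on L², and m₀/κ ≤ θ♯, then G_μ is convex on the set B_κ of
densities pointwise between κ·m₀ and m₀/κ. -/
theorem Gmu_convex_on_Bkappa (d : ℕ) (L : ℝ) [Fact (0 < L)]
    (W : (Fin d → AddCircle L) → ℝ) (hWmeas : Measurable W)
    (hWbdd : ∃ C : ℝ, ∀ z, |W z| ≤ C)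
    (μ m₀ κ θ : ℝ) (hm₀ : 0 < m₀) (hκ : κ ∈ Set.Ioo (0 : ℝ) (1 / 2)) (hθ : 0 < θ)
    (hmκθ : m₀ / κ ≤ θ)
    (hW : ∀ R : (Fin d → AddCircle L) → ℝ, MemLp R 2 volume →
      (∫ x, ∫ y, W (x - y) * R x * R y) ≥ -(1 / θ) * ∫ x, (R x) ^ 2)
    (N_A N_B : (Fin d → AddCircle L) → ℝ)
    (hAmeas : Measurable N_A) (hBmeas : Measurable N_B)
    (hAbd : ∀ x, κ * m₀ ≤ N_A x ∧ N_A x ≤ m₀ / κ)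
    (hBbd : ∀ x, κ * m₀ ≤ N_B x ∧ N_B x ≤ m₀ / κ)
    (s : ℝ) (hs : s ∈ Set.Icc (0 : ℝ) 1) :
    Gmu W μ (fun x => (1 - s) * N_A x + s * N_B x) ≤
      (1 - s) * Gmu W μ N_A + s * Gmu W μ N_B :=
  Gmu_convex_on_Bkappa_general d L W hWmeas hWbdd μ m₀ κ θ hm₀ hκ hmκθ hW N_A N_B hAmeas hBmeas hAbd
    hBbd s hs
end

section
/- Let 𝕋 = (ℝ/Lℤ)^d be the d-dimensional torus of side length L > 0 with its Haar measure, let W : 𝕋 → ℝ be bounded and measurable with w := ∫_𝕋 W dx, let μ ∈ ℝ, κ ∈ (0, 1/2), θ♯ > 0, and let m₀ > 0 satisfy m₀ = e^{μ − w·m₀}. Assume that for every R ∈ L²(𝕋), ∫_{𝕋×𝕋} W(x−y) R(x) R(y) dx dy ≥ −(1/θ♯)·∫_𝕋 R² dx. Then for every measurable N : 𝕋 → ℝ with κ·m₀ ≤ N(x) ≤ m₀/κ for all x, one has G_μ(N) − G_μ(m₀) ≥ σ·∫_𝕋 (N − m₀)² dx, where σ = (1/2)·(κ/m₀ − 1/θ♯)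 and G_μ(m₀) denotes the free energy of the constant density m₀. -/
/-!
Write `N = m₀ + R`. Since `(t log t)'' = 1 / t ≥ κ / m₀` on `(0, m₀ / κ]`, the entropy of `N`
exceeds its tangent at `m₀` by at least `(κ / (2 m₀)) R²` pointwise. By translation invariance
`∫ W(x - y) dy = w`, so the interaction energy of `m₀ + R` is that of `R` plus `2 m₀ w ∫ R` plus a
constant. The Kirkwood–Monroe relation `log m₀ = μ - w m₀` makes the terms linear in `∫ R` cancel,
and the stability hypothesis bounds the interaction energy of `R` by `-(1/θ) ∫ R²`.
-/

open MeasureTheory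

open Real Set

lemma ConvexOn.add_mul_sub_le_of_hasDerivAt {S : Set ℝ} {f : ℝ → ℝ} {x y f' : ℝ}
    (hf : ConvexOn ℝ S f) (hx : x ∈ S) (hy : y ∈ S) (hf' : HasDerivAt f f' x) :
    f x + f' * (y - x) ≤ f y := by
  rcases lt_trichotomy x y with hxy | rfl | hyx
  · have := hf.le_slope_of_hasDerivAt hx hy hxy hf'
    rw [slope_def_field, le_div_iff₀ (sub_pos.2 hxy)] at this
    linarith
  · simp
  · have := hf.slope_le_of_hasDerivAt hy hx hyx hf'
    rw [slope_def_field, div_le_iff₀ (sub_pos.2 hyx)] at this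
    linarith

lemma hasDerivAt_mul_log_sub_sq {u : ℝ} (hu : u ≠ 0) (c : ℝ) :
    HasDerivAt (fun t => t * log t - c / 2 * t ^ 2) (log u + 1 - c * u) u :=
  ((hasDerivAt_mul_log hu).sub ((hasDerivAt_pow 2 u).const_mul (c / 2))).congr_deriv (by ring)

lemma convexOn_mul_log_sub_sq {c : ℝ} (hc : 0 < c) :
    ConvexOn ℝ (Icc 0 c⁻¹) (fun t => t * log t - c / 2 * t ^ 2) := by
  refine MonotoneOn.convexOn_of_deriv (convex_Icc _ _) (by fun_prop) ?_ ?_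
  · rw [interior_Icc]
    exact fun u hu => (hasDerivAt_mul_log_sub_sq hu.1.ne' c).differentiableAt.differentiableWithinAt
  · rw [interior_Icc]
    intro u hu v hv huv
    rw [(hasDerivAt_mul_log_sub_sq hu.1.ne' c).deriv, (hasDerivAt_mul_log_sub_sq hv.1.ne' c).deriv]
    -- `c (v - u) ≤ 1 - u / v ≤ log (v / u)`, the first step because `c v ≤ 1`
    have hcv : c * v ≤ 1 := (le_inv_mul_iff₀ hc).1 (by simpa using hv.2.le)
    have hlog := one_sub_inv_le_log_of_pos (div_pos hv.1 hu.1)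
    rw [inv_div, log_div hv.1.ne' hu.1.ne'] at hlog
    have : c * (v - u) ≤ 1 - u / v := by
      rw [one_sub_div hv.1.ne', le_div_iff₀ hv.1]
      nlinarith [hu.1]
    linarith

lemma tangent_add_sq_le_mul_log {c m t : ℝ} (hc : 0 < c) (hm : m ∈ Ioc 0 c⁻¹)
    (ht : t ∈ Icc 0 c⁻¹) :
    m * log m + (log m + 1) * (t - m) + c / 2 * (t - m) ^ 2 ≤ t * log t := by
  have := (convexOn_mul_log_sub_sq hc).add_mul_sub_le_of_hasDerivAt (Ioc_subset_Icc_self hm) ht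
    (hasDerivAt_mul_log_sub_sq hm.1.ne' c)
  linarith

section Entropy

variable {α : Type*} [MeasurableSpace α] {μ : Measure α} [IsFiniteMeasure μ]

lemma integrable_comp_of_continuous_of_mem_Icc {f : ℝ → ℝ} (hf : Continuous f) {N : α → ℝ}
    (hN : Measurable N) {a b : ℝ} (hNab : ∀ x, N x ∈ Icc a b) :
    Integrable (fun x => f (N x)) μ := by
  obtain ⟨C, hC⟩ := isCompact_Icc.exists_bound_of_continuousOn hf.continuousOn
  exact .of_bound (hf.measurable.comp hN).aestronglyMeasurable C (ae_of_all _ fun x => hC _ (hNab x))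

lemma le_integral_entropy_sub_const {N : α → ℝ} (hN : Measurable N) {c m : ℝ} (hc : 0 < c)
    (hm : m ∈ Ioc 0 c⁻¹) (hNc : ∀ x, N x ∈ Icc 0 c⁻¹) (ν : ℝ) :
    (log m - ν) * (∫ x, (N x - m) ∂μ) + c / 2 * ∫ x, (N x - m) ^ 2 ∂μ ≤
      (∫ x, (N x * log (N x) - (1 + ν) * N x) ∂μ) - ∫ _, (m * log m - (1 + ν) * m) ∂μ := by
  have hint (f : ℝ → ℝ) (hf : Continuous f) : Integrable (fun x => f (N x)) μ :=
    integrable_comp_of_continuous_of_mem_Icc hf hN hNc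
  have hentropy := hint (fun t => t * log t - (1 + ν) * t) (by fun_prop)
  have hlin := hint (fun t => (log m - ν) * (t - m)) (by fun_prop)
  have hsq := hint (fun t => c / 2 * (t - m) ^ 2) (by fun_prop)
  rw [← integral_sub hentropy (integrable_const _), ← integral_const_mul, ← integral_const_mul,
    ← integral_add hlin hsq]
  refine integral_mono (hlin.add hsq) (hentropy.sub (integrable_const _)) fun x => ?_
  have := tangent_add_sq_le_mul_log hc hm (hNc x)
  dsimp only
  linarith

end Entropy

section Interaction

variable {G : Type*} [AddCommGroup G] [MeasurableSpace G] [MeasurableAdd₂ G] [MeasurableNeg G]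
  {μ : Measure G} [IsFiniteMeasure μ] {W R : G → ℝ} {C B : ℝ}

lemma integrable_uncurry_sub_mul (hW : Measurable W) (hWC : ∀ z, |W z| ≤ C) (hR : Measurable R)
    (hRB : ∀ x, |R x| ≤ B) :
    Integrable (Function.uncurry fun x y => W (x - y) * R y) (μ.prod μ) := by
  refine .of_bound (by fun_prop) (C * B) (ae_of_all _ fun p => ?_)
  simp only [Function.uncurry, Real.norm_eq_abs, abs_mul]
  exact mul_le_mul (hWC _) (hRB _) (abs_nonneg _) ((abs_nonneg _).trans (hWC 0))

variable [μ.IsAddLeftInvariant]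

lemma integral_integral_sub_mul (hW : Measurable W) (hWC : ∀ z, |W z| ≤ C) (hR : Measurable R)
    (hRB : ∀ x, |R x| ≤ B) :
    ∫ x, ∫ y, W (x - y) * R y ∂μ ∂μ = (∫ z, W z ∂μ) * ∫ y, R y ∂μ := by
  rw [integral_integral_swap (integrable_uncurry_sub_mul hW hWC hR hRB)]
  simp_rw [integral_mul_const, integral_sub_right_eq_self]
  exact integral_const_mul _ _

variable [μ.IsNegInvariant]

lemma integral_integral_sub_mul_add_const (hW : Measurable W) (hWC : ∀ z, |W z| ≤ C)
    (hR : Measurable R) (hRB : ∀ x, |R x| ≤ B) (m : ℝ) :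
    ∫ x, ∫ y, W (x - y) * (R x + m) * (R y + m) ∂μ ∂μ =
      (∫ x, ∫ y, W (x - y) * R x * R y ∂μ ∂μ) + 2 * m * (∫ z, W z ∂μ) * (∫ x, R x ∂μ) +
        m ^ 2 * (∫ z, W z ∂μ) * μ.real univ := by
  set w := ∫ z, W z ∂μ
  set f := fun x => ∫ y, W (x - y) * R y ∂μ
  have hf : Integrable f μ := (integrable_uncurry_sub_mul hW hWC hR hRB).integral_prod_left
  have hRint : Integrable R μ := .of_bound hR.aestronglyMeasurable B (ae_of_all _ hRB)
  have hRf : Integrable (fun x => R x * f x) μ :=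
    hf.bdd_mul hR.aestronglyMeasurable (ae_of_all _ hRB)
  have innerR (x : G) : ∫ y, W (x - y) * R x * R y ∂μ = R x * f x := by
    rw [← integral_const_mul]
    congr 1 with y
    ring
  have inner (x : G) : ∫ y, W (x - y) * (R x + m) * (R y + m) ∂μ =
      R x * f x + m * w * R x + m * f x + m ^ 2 * w := by
    have hWx : Integrable (fun y => W (x - y)) μ :=
      .of_bound (by fun_prop : Measurable fun y => W (x - y)).aestronglyMeasurable C
        (ae_of_all _ fun y => hWC _)
    have hWRx : Integrable (fun y => W (x - y) * R y) μ :=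
      hWx.mul_bdd hR.aestronglyMeasurable (ae_of_all _ hRB)
    have expand : (fun y => W (x - y) * (R x + m) * (R y + m)) =
        fun y => (R x + m) * (W (x - y) * R y) + (R x + m) * m * W (x - y) := by
      ext y; ring
    rw [expand, integral_add (hWRx.const_mul _) (hWx.const_mul _), integral_const_mul,
      integral_const_mul, integral_sub_left_eq_self]
    ring
  simp_rw [inner, innerR]
  rw [integral_add (by fun_prop) (by fun_prop), integral_add (by fun_prop) (by fun_prop),
    integral_add hRf (by fun_prop), integral_const_mul, integral_const_mul,
    integral_integral_sub_mul hW hWC hR hRB, integral_const, smul_eq_mul]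
  ring

end Interaction

instance isNegInvariant_volume_pi_addCircle {ι : Type*} [Fintype ι] (L : ℝ) [Fact (0 < L)] :
    (volume : Measure (ι → AddCircle L)).IsNegInvariant :=
  Measure.pi.isNegInvariant _

theorem free_energy_quadratic_lower_bound_general (d : ℕ) (L : ℝ) [Fact (0 < L)]
    (W : (Fin d → AddCircle L) → ℝ) (hWmeas : Measurable W)
    (hWbdd : ∃ C : ℝ, ∀ z, |W z| ≤ C)
    (μ κ θ m₀ : ℝ) (hκ : κ ∈ Set.Ioo (0 : ℝ) (1 / 2)) (hm₀ : 0 < m₀)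
    (hKM : m₀ = Real.exp (μ - (∫ x, W x) * m₀))
    (hW : ∀ R : (Fin d → AddCircle L) → ℝ, MemLp R 2 volume →
      (∫ x, ∫ y, W (x - y) * R x * R y) ≥ -(1 / θ) * ∫ x, (R x) ^ 2)
    (N : (Fin d → AddCircle L) → ℝ) (hNmeas : Measurable N)
    (hNbd : ∀ x, κ * m₀ ≤ N x ∧ N x ≤ m₀ / κ) :
    Gmu W μ N - Gmu W μ (fun _ => m₀) ≥
      (1 / 2) * (κ / m₀ - 1 / θ) * ∫ x, (N x - m₀) ^ 2 := by
  obtain ⟨hκ0, hκ1⟩ := hκ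
  obtain ⟨C, hWC⟩ := hWbdd
  have hc : 0 < κ / m₀ := div_pos hκ0 hm₀
  have hm₀c : m₀ ∈ Ioc 0 (κ / m₀)⁻¹ :=
    ⟨hm₀, by rw [inv_div]; exact le_div_self hm₀.le hκ0 (by linarith)⟩
  have hNc (x) : N x ∈ Icc 0 (κ / m₀)⁻¹ :=
    ⟨(mul_pos hκ0 hm₀).le.trans (hNbd x).1, inv_div κ m₀ ▸ (hNbd x).2⟩
  have hlog : log m₀ - μ = -((∫ x, W x) * m₀) := by
    nth_rw 1 [hKM]
    rw [log_exp]
    ring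
  have hR : Measurable fun x => N x - m₀ := hNmeas.sub_const m₀
  have hRB (x) : |N x - m₀| ≤ m₀ / κ + m₀ := by
    rw [abs_le]
    constructor <;> nlinarith [hNbd x]
  have entropy := le_integral_entropy_sub_const (μ := volume) hNmeas hc hm₀c hNc μ
  rw [hlog] at entropy
  have interaction := integral_integral_sub_mul_add_const (μ := volume) hWmeas hWC hR hRB m₀
  simp only [sub_add_cancel] at interaction
  have interaction₀ := integral_integral_sub_mul_add_const (μ := volume) (R := fun _ => 0)
    (B := 0) hWmeas hWC measurable_const (fun _ => by simp) m₀
  simp only [zero_add, mul_zero, integral_zero, add_zero] at interaction₀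
  have stability := hW _ (.of_bound hR.aestronglyMeasurable _ (ae_of_all _ hRB))
  simp only [Gmu, interaction, interaction₀]
  linear_combination entropy + (1 / 2) * stability

/-- The Claim in the proof of the Main Theorem: quadratic lower bound on the free
energy excess over the uniform state m₀ (satisfying the Kirkwood–Monroe relation
m₀ = e^{μ − w·m₀}, w = ∫ W) on the set B_κ, with σ = (1/2)(κ/m₀ − 1/θ♯). -/
theorem free_energy_quadratic_lower_bound (d : ℕ) (L : ℝ) [Fact (0 < L)]
    (W : (Fin d → AddCircle L) → ℝ) (hWmeas : Measurable W)
    (hWbdd : ∃ C : ℝ, ∀ z, |W z| ≤ C)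
    (μ κ θ m₀ : ℝ) (hκ : κ ∈ Set.Ioo (0 : ℝ) (1 / 2)) (hθ : 0 < θ) (hm₀ : 0 < m₀)
    (hKM : m₀ = Real.exp (μ - (∫ x, W x) * m₀))
    (hW : ∀ R : (Fin d → AddCircle L) → ℝ, MemLp R 2 volume →
      (∫ x, ∫ y, W (x - y) * R x * R y) ≥ -(1 / θ) * ∫ x, (R x) ^ 2)
    (N : (Fin d → AddCircle L) → ℝ) (hNmeas : Measurable N)
    (hNbd : ∀ x, κ * m₀ ≤ N x ∧ N x ≤ m₀ / κ) :
    Gmu W μ N - Gmu W μ (fun _ => m₀) ≥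
      (1 / 2) * (κ / m₀ - 1 / θ) * ∫ x, (N x - m₀) ^ 2 :=
  free_energy_quadratic_lower_bound_general d L W hWmeas hWbdd μ κ θ m₀ hκ hm₀ hKM hW N hNmeas hNbd
end

section
/- Let d ≥ 1, let a, b : ℤ^d → ℂ satisfy Σ_k |k|·|a(k)| < ∞, Σ_k |k|²·|a(k)| < ∞, Σ_k |k|·|b(k)| < ∞, Σ_k |k|²·|b(k)| < ∞, and let h > 0. Then Σ_{k ∈ ℤ^d} (h|k|²/(1 + h|k|²))·|Σ_{q ∈ ℤ^d} (q·(k−q))·a(q)·b(k−q)| ≤ (h^{1/2}/2)·[(Σ_k |k|²|a(k)|)·(Σ_k |k||b(k)|) + (Σ_k |k||a(k)|)·(Σ_k |k|²|b(k)|)]. -/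
/-- Euclidean norm of a lattice vector k ∈ ℤ^d viewed in ℝ^d. -/
noncomputable def znorm {d : ℕ} (k : Fin d → ℤ) : ℝ :=
  Real.sqrt (∑ i, ((k i : ℝ)) ^ 2)

/-- Euclidean inner product of two lattice vectors in ℤ^d viewed in ℝ^d. -/
def zdot {d : ℕ} (k q : Fin d → ℤ) : ℝ :=
  ∑ i, (k i : ℝ) * (q i : ℝ)

/-!
Bound the weight by `h|k|² / (1 + h|k|²) ≤ (√h / 2)|k|` (AM–GM: `1 + h|k|² ≥ 2√h|k|`), then
distribute `|k| ≤ |q| + |k - q|` and use Cauchy–Schwarz `|q·(k-q)| ≤ |q||k - q|`. Each term of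
the resulting double sum over `(q, k - q)` factors, and the substitution `(k, q) ↦ (q, k - q)`
turns it into the product of the `D₁` and `D₂` norms of `a` and `b`.
-/

open scoped InnerProductSpace

theorem mul_sq_div_one_add_mul_sq_le {h x : ℝ} (hh : 0 ≤ h) (hx : 0 ≤ x) :
    h * x ^ 2 / (1 + h * x ^ 2) ≤ √h / 2 * x := by
  obtain ⟨s, hs, rfl⟩ : ∃ s, 0 ≤ s ∧ h = s ^ 2 := ⟨√h, Real.sqrt_nonneg h, (Real.sq_sqrt hh).symm⟩
  rw [Real.sqrt_sq hs, div_le_iff₀ (by positivity)]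
  nlinarith [mul_nonneg (mul_nonneg hs hx) (sq_nonneg (1 - s * x))]

theorem mul_sq_div_one_add_mul_sq_norm_add_mul_abs_inner_le {E : Type*} [NormedAddCommGroup E]
    [InnerProductSpace ℝ E] {h : ℝ} (hh : 0 ≤ h) (x y : E) :
    h * ‖x + y‖ ^ 2 / (1 + h * ‖x + y‖ ^ 2) * |⟪x, y⟫_ℝ| ≤
      √h / 2 * (‖x‖ ^ 2 * ‖y‖ + ‖x‖ * ‖y‖ ^ 2) :=
  calc h * ‖x + y‖ ^ 2 / (1 + h * ‖x + y‖ ^ 2) * |⟪x, y⟫_ℝ|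
      ≤ √h / 2 * ‖x + y‖ * (‖x‖ * ‖y‖) := by
        gcongr
        · exact mul_sq_div_one_add_mul_sq_le hh (norm_nonneg _)
        · exact abs_real_inner_le_norm x y
    _ ≤ √h / 2 * (‖x‖ + ‖y‖) * (‖x‖ * ‖y‖) := by gcongr; exact norm_add_le x y
    _ = √h / 2 * (‖x‖ ^ 2 * ‖y‖ + ‖x‖ * ‖y‖ ^ 2) := by ring

section Convolution

variable {ι G E : Type*} [NormedAddCommGroup E] [NormedSpace ℝ E]

theorem mul_norm_tsum_le_tsum {w : ℝ} (hw : 0 ≤ w) {c : ι → E} {g : ι → ℝ} (hg : Summable g)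
    (hbound : ∀ i, w * ‖c i‖ ≤ g i) : w * ‖∑' i, c i‖ ≤ ∑' i, g i := by
  rw [← abs_of_nonneg hw, ← Real.norm_eq_abs, ← norm_smul, ← tsum_const_smul'']
  refine tsum_of_norm_bounded hg.hasSum fun i => ?_
  rw [norm_smul, Real.norm_eq_abs, abs_of_nonneg hw]
  exact hbound i

def convolutionEquiv (G : Type*) [AddCommGroup G] : G × G ≃ G × G :=
  (Equiv.prodComm G G).trans (Equiv.prodShear (Equiv.refl G) Equiv.subRight)

@[simp]
theorem convolutionEquiv_apply [AddCommGroup G] (p : G × G) :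
    convolutionEquiv G p = (p.2, p.1 - p.2) := rfl

theorem tsum_mul_norm_tsum_le [AddCommGroup G] {w : G → ℝ} (hw : ∀ k, 0 ≤ w k)
    {c : G → G → E} {H : G × G → ℝ} (hH : Summable H)
    (hbound : ∀ q m, w (q + m) * ‖c q m‖ ≤ H (q, m)) :
    ∑' k, w k * ‖∑' q, c q (k - q)‖ ≤ ∑' p, H p := by
  have hS : Summable (H ∘ convolutionEquiv G) := (convolutionEquiv G).summable_iff.mpr hH
  have hfiber : ∀ k, w k * ‖∑' q, c q (k - q)‖ ≤ ∑' q, H (q, k - q) := fun k =>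
    mul_norm_tsum_le_tsum (hw k) (hS.prod_factor k) fun q => by
      simpa using hbound q (k - q)
  calc ∑' k, w k * ‖∑' q, c q (k - q)‖
      ≤ ∑' k, ∑' q, H (q, k - q) :=
        Summable.tsum_le_tsum hfiber
          (hS.prod.of_nonneg_of_le (fun k => mul_nonneg (hw k) (norm_nonneg _)) hfiber) hS.prod
    _ = ∑' p, H (convolutionEquiv G p) := hS.tsum_prod.symm
    _ = ∑' p, H p := (convolutionEquiv G).tsum_eq H

end Convolution

section Lattice

variable {d : ℕ}

noncomputable def latticeToEuclidean (k : Fin d → ℤ) : EuclideanSpace ℝ (Fin d) :=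
  WithLp.toLp 2 fun i => (k i : ℝ)

theorem znorm_nonneg (k : Fin d → ℤ) : 0 ≤ znorm k := Real.sqrt_nonneg _

theorem latticeToEuclidean_add (q m : Fin d → ℤ) :
    latticeToEuclidean (q + m) = latticeToEuclidean q + latticeToEuclidean m := by
  ext i
  simp [latticeToEuclidean]

theorem znorm_eq_norm (k : Fin d → ℤ) : znorm k = ‖latticeToEuclidean k‖ := by
  simp [znorm, latticeToEuclidean, EuclideanSpace.norm_eq]

theorem zdot_eq_inner (q m : Fin d → ℤ) :
    zdot q m = ⟪latticeToEuclidean q, latticeToEuclidean m⟫_ℝ := by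
  simp [zdot, latticeToEuclidean, PiLp.inner_apply, mul_comm]

theorem mul_sq_div_one_add_mul_sq_znorm_add_mul_norm_zdot_mul_mul_le {h : ℝ} (hh : 0 ≤ h)
    (a b : (Fin d → ℤ) → ℂ) (q m : Fin d → ℤ) :
    h * znorm (q + m) ^ 2 / (1 + h * znorm (q + m) ^ 2) * ‖(zdot q m : ℂ) * a q * b m‖ ≤
      √h / 2 *
        (znorm q ^ 2 * ‖a q‖ * (znorm m * ‖b m‖) + znorm q * ‖a q‖ * (znorm m ^ 2 * ‖b m‖)) := by
  have hzdot : h * znorm (q + m) ^ 2 / (1 + h * znorm (q + m) ^ 2) * |zdot q m| ≤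
      √h / 2 * (znorm q ^ 2 * znorm m + znorm q * znorm m ^ 2) := by
    simpa only [znorm_eq_norm, zdot_eq_inner, latticeToEuclidean_add] using
      mul_sq_div_one_add_mul_sq_norm_add_mul_abs_inner_le hh
        (latticeToEuclidean q) (latticeToEuclidean m)
  rw [norm_mul, norm_mul, Complex.norm_real, Real.norm_eq_abs]
  calc _ = h * znorm (q + m) ^ 2 / (1 + h * znorm (q + m) ^ 2) * |zdot q m| *
        (‖a q‖ * ‖b m‖) := by ring
    _ ≤ √h / 2 * (znorm q ^ 2 * znorm m + znorm q * znorm m ^ 2) * (‖a q‖ * ‖b m‖) :=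
        mul_le_mul_of_nonneg_right hzdot (by positivity)
    _ = _ := by ring

end Lattice

theorem claim_A1_estimate_general (d : ℕ) (a b : (Fin d → ℤ) → ℂ)
    (h : ℝ) (hh : 0 < h)
    (ha1 : Summable fun k => znorm k * ‖a k‖)
    (ha2 : Summable fun k => znorm k ^ 2 * ‖a k‖)
    (hb1 : Summable fun k => znorm k * ‖b k‖)
    (hb2 : Summable fun k => znorm k ^ 2 * ‖b k‖) :
    (∑' k : Fin d → ℤ, (h * znorm k ^ 2 / (1 + h * znorm k ^ 2)) *
        ‖∑' q : Fin d → ℤ, (zdot q (k - q) : ℂ) * a q * b (k - q)‖) ≤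
      (Real.sqrt h / 2) *
        ((∑' k : Fin d → ℤ, znorm k ^ 2 * ‖a k‖) *
            (∑' k : Fin d → ℤ, znorm k * ‖b k‖) +
          (∑' k : Fin d → ℤ, znorm k * ‖a k‖) *
            (∑' k : Fin d → ℤ, znorm k ^ 2 * ‖b k‖)) := by
  have h21 := ha2.mul_of_nonneg hb1 (fun k => mul_nonneg (pow_nonneg (znorm_nonneg k) 2)
    (norm_nonneg _)) (fun k => mul_nonneg (znorm_nonneg k) (norm_nonneg _))
  have h12 := ha1.mul_of_nonneg hb2 (fun k => mul_nonneg (znorm_nonneg k) (norm_nonneg _))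
    (fun k => mul_nonneg (pow_nonneg (znorm_nonneg k) 2) (norm_nonneg _))
  calc _ ≤ ∑' p : (Fin d → ℤ) × (Fin d → ℤ), √h / 2 *
        (znorm p.1 ^ 2 * ‖a p.1‖ * (znorm p.2 * ‖b p.2‖) +
          znorm p.1 * ‖a p.1‖ * (znorm p.2 ^ 2 * ‖b p.2‖)) :=
        tsum_mul_norm_tsum_le (c := fun q m => (zdot q m : ℂ) * a q * b m)
          (fun k => by positivity) ((h21.add h12).mul_left _)
          (mul_sq_div_one_add_mul_sq_znorm_add_mul_norm_zdot_mul_mul_le hh.le a b)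
    _ = _ := by rw [tsum_mul_left, h21.tsum_add h12, ha2.tsum_mul_tsum hb1 h21,
          ha1.tsum_mul_tsum hb2 h12]

/-- The a priori estimate of Claim A₁ in Appendix A of the paper:
Σ_k (h|k|²/(1+h|k|²))·|Σ_q (q·(k−q)) a(q) b(k−q)|
  ≤ (√h/2)·[‖a‖_{D₂}‖b‖_{D₁} + ‖a‖_{D₁}‖b‖_{D₂}],
using h|k|/(1+h|k|²) ≤ √h/2. -/
theorem claim_A1_estimate (d : ℕ) (hd : 1 ≤ d) (a b : (Fin d → ℤ) → ℂ)
    (h : ℝ) (hh : 0 < h)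
    (ha1 : Summable fun k => znorm k * ‖a k‖)
    (ha2 : Summable fun k => znorm k ^ 2 * ‖a k‖)
    (hb1 : Summable fun k => znorm k * ‖b k‖)
    (hb2 : Summable fun k => znorm k ^ 2 * ‖b k‖) :
    (∑' k : Fin d → ℤ, (h * znorm k ^ 2 / (1 + h * znorm k ^ 2)) *
        ‖∑' q : Fin d → ℤ, (zdot q (k - q) : ℂ) * a q * b (k - q)‖) ≤
      (Real.sqrt h / 2) *
        ((∑' k : Fin d → ℤ, znorm k ^ 2 * ‖a k‖) *
            (∑' k : Fin d → ℤ, znorm k * ‖b k‖) +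
          (∑' k : Fin d → ℤ, znorm k * ‖a k‖) *
            (∑' k : Fin d → ℤ, znorm k ^ 2 * ‖b k‖)) :=
  claim_A1_estimate_general d a b h hh ha1 ha2 hb1 hb2
end

section
/- Let 𝕋 = (ℝ/Lℤ)^d be the d-dimensional torus of side length L > 0 with its Haar measure, let W : 𝕋 → ℝ be bounded and measurable, let μ ∈ ℝ, and let N_A, N_B : 𝕋 → ℝ be measurable with 0 < c ≤ N_A(x) ≤ C and 0 < c ≤ N_B(x) ≤ C for all x and some constants c, C. Set R = N_B − N_A and N_s = (1−s)·N_A + s·N_B. Then the function g(s) = G_μ(N_s) is twice differentiable on (0, 1) and for every s ∈ (0, 1), g''(s) = ∫_𝕋 R(x)²/N_s(x) dx + ∫_{𝕋×𝕋} W(x−y)·R(x)·R(y) dx dy. -/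
open MeasureTheory

/-!
Along the segment the interaction energy is a quadratic polynomial in `s` with leading
coefficient `∫∫ W(x−y) R(x) R(y)`: since `W`, `N_A`, `N_B` are bounded, the integrand is
integrable on the product of the finite torus with itself, so the iterated integral can be
expanded there. The entropy part is differentiated twice under the integral sign: for
`s ∈ (0, 1)` the density `N_s` takes values in `[c, C]`, where `t log t` and its first two
derivatives are bounded, so the `s`-derivatives of the integrands are dominated by constants.
-/

open Set
open scoped ENNReal

theorem hasDerivAt_one_sub_mul_add_mul (a b s : ℝ) :
    HasDerivAt (fun s => (1 - s) * a + s * b) (b - a) s := by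
  have h := AffineMap.hasDerivAt_lineMap (a := a) (b := b) (x := s)
  rwa [show ⇑(AffineMap.lineMap a b : ℝ →ᵃ[ℝ] ℝ) = fun s => (1 - s) * a + s * b from
    funext (AffineMap.lineMap_apply_ring a b)] at h

section FiniteMeasure

variable {α : Type*} [MeasurableSpace α] {m : Measure α} [IsFiniteMeasure m]

theorem hasDerivAt_integral_of_isOpen_of_norm_deriv_le {U : Set ℝ} (hU : IsOpen U) {s₀ : ℝ}
    (hs₀ : s₀ ∈ U) {F F' : ℝ → α → ℝ} (hF_meas : ∀ s ∈ U, AEStronglyMeasurable (F s) m)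
    (hF_int : Integrable (F s₀) m) (hF'_meas : AEStronglyMeasurable (F' s₀) m) {M : ℝ}
    (hF'_le : ∀ s ∈ U, ∀ x, ‖F' s x‖ ≤ M)
    (hF_deriv : ∀ s ∈ U, ∀ x, HasDerivAt (F · x) (F' s x) s) :
    HasDerivAt (fun s => ∫ x, F s x ∂m) (∫ x, F' s₀ x ∂m) s₀ :=
  (hasDerivAt_integral_of_dominated_loc_of_deriv_le (hU.mem_nhds hs₀)
    (Filter.eventually_of_mem (hU.mem_nhds hs₀) hF_meas) hF_int hF'_meas
    (ae_of_all _ fun x s hs => hF'_le s hs x) (integrable_const M)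
    (ae_of_all _ fun x s hs => hF_deriv s hs x)).2

theorem integral_integral_kernel_segment_eq_quadratic {K : α → α → ℝ}
    (hK : MemLp (Function.uncurry K) ∞ (m.prod m)) {u v : α → ℝ} (hu : MemLp u ∞ m)
    (hv : MemLp v ∞ m) :
    ∃ q₀ q₁ : ℝ, ∀ s : ℝ,
      ∫ x, ∫ y, K x y * ((1 - s) * u x + s * v x) * ((1 - s) * u y + s * v y) ∂m ∂m
        = q₀ + q₁ * s + (∫ x, ∫ y, K x y * (v x - u x) * (v y - u y) ∂m ∂m) * s ^ 2 := by
  have hint {f g : α → ℝ} (hf : MemLp f ∞ m) (hg : MemLp g ∞ m) :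
      Integrable (fun p : α × α => K p.1 p.2 * f p.1 * g p.2) (m.prod m) :=
    ((hg.comp_snd m).mul' (r := ∞) ((hf.comp_fst m).mul' (r := ∞) hK)).integrable le_top
  have hr : MemLp (fun x => v x - u x) ∞ m := hv.sub hu
  have h₀ := hint hu hu
  have h₁ : Integrable (fun p : α × α => K p.1 p.2 * u p.1 * (v p.2 - u p.2)
      + K p.1 p.2 * (v p.1 - u p.1) * u p.2) (m.prod m) := (hint hu hr).add (hint hr hu)
  have h₂ := hint hr hr
  refine ⟨∫ p, K p.1 p.2 * u p.1 * u p.2 ∂(m.prod m),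
    ∫ p, (K p.1 p.2 * u p.1 * (v p.2 - u p.2) + K p.1 p.2 * (v p.1 - u p.1) * u p.2) ∂(m.prod m),
    fun s => ?_⟩
  have hs : MemLp (fun x => (1 - s) * u x + s * v x) ∞ m :=
    (hu.const_mul _).add (hv.const_mul _)
  calc ∫ x, ∫ y, K x y * ((1 - s) * u x + s * v x) * ((1 - s) * u y + s * v y) ∂m ∂m
      = ∫ p, K p.1 p.2 * ((1 - s) * u p.1 + s * v p.1) * ((1 - s) * u p.2 + s * v p.2)
          ∂(m.prod m) := (integral_prod _ (hint hs hs)).symm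
    _ = ∫ p, (K p.1 p.2 * u p.1 * u p.2
          + s * (K p.1 p.2 * u p.1 * (v p.2 - u p.2) + K p.1 p.2 * (v p.1 - u p.1) * u p.2)
          + s ^ 2 * (K p.1 p.2 * (v p.1 - u p.1) * (v p.2 - u p.2))) ∂(m.prod m) := by
        congr 1; funext p; ring
    _ = _ := by
        rw [integral_add, integral_add h₀ (h₁.const_mul s), integral_const_mul,
          integral_const_mul, integral_prod _ h₂]
        · ring
        · exact h₀.add (h₁.const_mul s)
        · exact h₂.const_mul _

variable {N_A N_B : α → ℝ} {c C : ℝ}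

theorem hasDerivAt_integral_mul_comp_segment (hA : Measurable N_A) (hB : Measurable N_B)
    (hAbd : ∀ x, N_A x ∈ Icc c C) (hBbd : ∀ x, N_B x ∈ Icc c C)
    {a : α → ℝ} (ha : Measurable a) {Ma : ℝ} (ha_le : ∀ x, |a x| ≤ Ma)
    {φ φ' : ℝ → ℝ} (hφ : Measurable φ) (hφ' : Measurable φ')
    (hφ_deriv : ∀ t ∈ Icc c C, HasDerivAt φ (φ' t) t) (hφ'_cont : ContinuousOn φ' (Icc c C))
    {s₀ : ℝ} (hs₀ : s₀ ∈ Ioo 0 1) :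
    HasDerivAt (fun s => ∫ x, a x * φ ((1 - s) * N_A x + s * N_B x) ∂m)
      (∫ x, a x * (N_B x - N_A x) * φ' ((1 - s₀) * N_A x + s₀ * N_B x) ∂m) s₀ := by
  have hN_mem (s : ℝ) (hs : s ∈ Ioo 0 1) (x : α) : (1 - s) * N_A x + s * N_B x ∈ Icc c C :=
    convex_Icc c C (hAbd x) (hBbd x) (sub_nonneg.2 hs.2.le) hs.1.le (sub_add_cancel 1 s)
  obtain ⟨Mφ, hMφ⟩ := isCompact_Icc.exists_bound_of_continuousOn
    fun t ht => (hφ_deriv t ht).continuousAt.continuousWithinAt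
  obtain ⟨Mφ', hMφ'⟩ := isCompact_Icc.exists_bound_of_continuousOn hφ'_cont
  have hR_le (x : α) : |N_B x - N_A x| ≤ C - c :=
    abs_sub_le_of_le_of_le (hBbd x).1 (hBbd x).2 (hAbd x).1 (hAbd x).2
  refine hasDerivAt_integral_of_isOpen_of_norm_deriv_le isOpen_Ioo hs₀
    (F := fun s x => a x * φ ((1 - s) * N_A x + s * N_B x))
    (F' := fun s x => a x * (N_B x - N_A x) * φ' ((1 - s) * N_A x + s * N_B x))
    (fun s _ => by fun_prop)
    (Integrable.of_bound (by fun_prop) (Ma * Mφ) (ae_of_all _ fun x => ?_))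
    (by fun_prop) (M := Ma * (C - c) * Mφ') (fun s hs x => ?_) (fun s hs x => ?_)
  · have hax := ha_le x
    have := hMφ _ (hN_mem s₀ hs₀ x)
    rw [norm_mul, Real.norm_eq_abs]
    gcongr
    exact (abs_nonneg _).trans hax
  · have hax := ha_le x
    have hRx := hR_le x
    have := hMφ' _ (hN_mem s hs x)
    rw [norm_mul, norm_mul, Real.norm_eq_abs, Real.norm_eq_abs]
    gcongr
    exacts [mul_nonneg ((abs_nonneg _).trans hax) ((abs_nonneg _).trans hRx),
      (abs_nonneg _).trans hax]
  · refine (((hφ_deriv _ (hN_mem s hs x)).comp s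
      (hasDerivAt_one_sub_mul_add_mul (N_A x) (N_B x) s)).const_mul (a x)).congr_deriv ?_
    ring

theorem hasDerivAt_integral_entropy_segment (hA : Measurable N_A) (hB : Measurable N_B)
    (hc : 0 < c) (hAbd : ∀ x, N_A x ∈ Icc c C) (hBbd : ∀ x, N_B x ∈ Icc c C) (μ : ℝ)
    {s₀ : ℝ} (hs₀ : s₀ ∈ Ioo 0 1) :
    HasDerivAt (fun s => ∫ x, (((1 - s) * N_A x + s * N_B x)
        * Real.log ((1 - s) * N_A x + s * N_B x) - (1 + μ) * ((1 - s) * N_A x + s * N_B x)) ∂m)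
      (∫ x, (N_B x - N_A x) * (Real.log ((1 - s₀) * N_A x + s₀ * N_B x) - μ) ∂m) s₀ := by
  have hφ (t : ℝ) (ht : t ∈ Icc c C) :
      HasDerivAt (fun t => t * Real.log t - (1 + μ) * t) (Real.log t - μ) t :=
    ((Real.hasDerivAt_mul_log (hc.trans_le ht.1).ne').sub
      ((hasDerivAt_id t).const_mul (1 + μ))).congr_deriv (by ring)
  have hφ'_cont : ContinuousOn (fun t => Real.log t - μ) (Icc c C) :=
    (Real.continuousOn_log.mono fun t ht => (hc.trans_le ht.1).ne').sub continuousOn_const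
  simpa only [Pi.one_apply, one_mul] using
    hasDerivAt_integral_mul_comp_segment (m := m) hA hB hAbd hBbd measurable_const
      (a := 1) (Ma := 1) (by simp) (by fun_prop) (by fun_prop) hφ hφ'_cont hs₀

theorem hasDerivAt_integral_mul_log_segment (hA : Measurable N_A) (hB : Measurable N_B)
    (hc : 0 < c) (hAbd : ∀ x, N_A x ∈ Icc c C) (hBbd : ∀ x, N_B x ∈ Icc c C) (μ : ℝ)
    {s₀ : ℝ} (hs₀ : s₀ ∈ Ioo 0 1) :
    HasDerivAt (fun s => ∫ x, (N_B x - N_A x) * (Real.log ((1 - s) * N_A x + s * N_B x) - μ) ∂m)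
      (∫ x, (N_B x - N_A x) ^ 2 / ((1 - s₀) * N_A x + s₀ * N_B x) ∂m) s₀ := by
  have hne {t : ℝ} (ht : t ∈ Icc c C) : t ≠ 0 := (hc.trans_le ht.1).ne'
  refine (hasDerivAt_integral_mul_comp_segment hA hB hAbd hBbd (hB.sub hA)
    (a := fun x => N_B x - N_A x) (Ma := C - c)
    (fun x => abs_sub_le_of_le_of_le (hBbd x).1 (hBbd x).2 (hAbd x).1 (hAbd x).2)
    (φ' := fun t => t⁻¹) (by fun_prop) (by fun_prop)
    (fun t ht => (Real.hasDerivAt_log (hne ht)).sub_const μ)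
    (continuousOn_inv₀.mono fun t ht => hne ht) hs₀).congr_deriv
    (integral_congr_ae (ae_of_all _ fun x => ?_))
  ring

end FiniteMeasure

theorem exists_Gmu_segment_eq {d : ℕ} {L : ℝ} [Fact (0 < L)]
    {W : (Fin d → AddCircle L) → ℝ} (hW : Measurable W) {CW : ℝ} (hCW : ∀ z, |W z| ≤ CW)
    (μ : ℝ) {N_A N_B : (Fin d → AddCircle L) → ℝ} (hA : Measurable N_A) (hB : Measurable N_B)
    {c C : ℝ} (hAbd : ∀ x, N_A x ∈ Icc c C) (hBbd : ∀ x, N_B x ∈ Icc c C) :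
    ∃ q₀ q₁ : ℝ, ∀ s : ℝ, Gmu W μ (fun x => (1 - s) * N_A x + s * N_B x)
      = (∫ x, (((1 - s) * N_A x + s * N_B x) * Real.log ((1 - s) * N_A x + s * N_B x)
          - (1 + μ) * ((1 - s) * N_A x + s * N_B x)))
        + 1 / 2 * (q₀ + q₁ * s
          + (∫ x, ∫ y, W (x - y) * (N_B x - N_A x) * (N_B y - N_A y)) * s ^ 2) := by
  have hK : MemLp (Function.uncurry fun x y => W (x - y)) ∞ (volume.prod volume) :=
    memLp_top_of_bound (hW.comp (measurable_fst.sub measurable_snd)).aestronglyMeasurable CW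
      (ae_of_all _ fun _ => hCW _)
  obtain ⟨q₀, q₁, hQ⟩ := integral_integral_kernel_segment_eq_quadratic hK
    (memLp_of_bounded (ae_of_all _ hAbd) hA.aestronglyMeasurable ∞)
    (memLp_of_bounded (ae_of_all _ hBbd) hB.aestronglyMeasurable ∞)
  exact ⟨q₀, q₁, fun s => by simp only [Gmu, hQ]⟩

/-- The second-derivative computation along line segments in the proof of
Proposition 4.2 of the paper: with R = N_B − N_A and N_s = (1−s)N_A + sN_B,
the function g(s) = G_μ(N_s) is twice differentiable on (0,1) with
g''(s) = ∫ R²/N_s dx + ∫∫ W(x−y) R(x) R(y) dx dy. -/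
theorem Gmu_second_derivative_along_segment (d : ℕ) (L : ℝ) [Fact (0 < L)]
    (W : (Fin d → AddCircle L) → ℝ) (hWmeas : Measurable W)
    (hWbdd : ∃ CW : ℝ, ∀ z, |W z| ≤ CW)
    (μ : ℝ) (N_A N_B : (Fin d → AddCircle L) → ℝ)
    (hAmeas : Measurable N_A) (hBmeas : Measurable N_B)
    (c C : ℝ) (hc : 0 < c)
    (hAbd : ∀ x, c ≤ N_A x ∧ N_A x ≤ C) (hBbd : ∀ x, c ≤ N_B x ∧ N_B x ≤ C) :
    ∃ g' : ℝ → ℝ,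
      ∀ s ∈ Set.Ioo (0 : ℝ) 1,
        HasDerivAt (fun s : ℝ =>
            Gmu W μ (fun x => (1 - s) * N_A x + s * N_B x)) (g' s) s ∧
        HasDerivAt g'
          ((∫ x, (N_B x - N_A x) ^ 2 / ((1 - s) * N_A x + s * N_B x)) +
            ∫ x, ∫ y, W (x - y) * (N_B x - N_A x) * (N_B y - N_A y)) s := by
  obtain ⟨CW, hCW⟩ := hWbdd
  obtain ⟨q₀, q₁, hG⟩ := exists_Gmu_segment_eq hWmeas hCW μ hAmeas hBmeas hAbd hBbd
  set q₂ := ∫ x, ∫ y, W (x - y) * (N_B x - N_A x) * (N_B y - N_A y)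
  refine ⟨fun s => (∫ x, (N_B x - N_A x) * (Real.log ((1 - s) * N_A x + s * N_B x) - μ))
    + (q₁ + 2 * q₂ * s) / 2, fun s hs => ⟨?_, ?_⟩⟩
  · have hQ : HasDerivAt (fun s => 1 / 2 * (q₀ + q₁ * s + q₂ * s ^ 2))
        ((q₁ + 2 * q₂ * s) / 2) s :=
      ((((hasDerivAt_id s).const_mul q₁).const_add q₀).add
        ((hasDerivAt_pow 2 s).const_mul q₂)).const_mul (1 / 2) |>.congr_deriv (by ring)
    rw [funext hG]
    exact (hasDerivAt_integral_entropy_segment hAmeas hBmeas hc hAbd hBbd μ hs).add hQ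
  · have hQ : HasDerivAt (fun s => (q₁ + 2 * q₂ * s) / 2) q₂ s :=
      (((hasDerivAt_id s).const_mul (2 * q₂)).const_add q₁).div_const 2 |>.congr_deriv (by ring)
    exact (hasDerivAt_integral_mul_log_segment hAmeas hBmeas hc hAbd hBbd μ hs).add hQ
end
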